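/- Let n,m ≥ 1 and u : {0,1}ⁿ × {0,1}ᵐ → ℝ with U := max_{x,y} |u(x,y)| > 0, and let γ ∈ (0,1/2). If (p(t),q(t)) is a solution of the Red Queen dynamics with values in (0,1)^{n+m} and at time t the state (p(t),q(t)) is γ-far from every corner (x,y) ∈ {0,1}ⁿ × {0,1}ᵐ, then for every s ∈ [t, t + 1/(4U)], the state (p(s),q(s)) is (γ/2)-far from every corner. -/

import Mathlib

open MeasureTheory

noncomputable section

/-- `p_{i,b}`: the probability that gene `i` takes allele `b`
(`b = false ↦ pᵢ`, `b = true ↦ 1 − pᵢ`). -/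
def coord {n : ℕ} (p : Fin n → ℝ) (i : Fin n) (b : Bool) : ℝ :=
  if b then 1 - p i else p i

/-- `x` with its `i`-th bit flipped. -/
def bflip {n : ℕ} (x : Fin n → Bool) (i : Fin n) : Fin n → Bool :=
  Function.update x i (!x i)

/-- `K_{A,i}(x,y,p,q) = Π_{i'≠i} p_{i',x_{i'}} Π_j q_{j,y_j}`. -/
def KA {n m : ℕ} (p : Fin n → ℝ) (q : Fin m → ℝ) (i : Fin n)
    (x : Fin n → Bool) (y : Fin m → Bool) : ℝ :=
  (∏ i' ∈ Finset.univ.erase i, coord p i' (x i')) * ∏ j, coord q j (y j)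

/-- `K_{B,j}(x,y,p,q) = Π_i p_{i,x_i} Π_{j'≠j} q_{j',y_{j'}}`. -/
def KB {n m : ℕ} (p : Fin n → ℝ) (q : Fin m → ℝ) (j : Fin m)
    (x : Fin n → Bool) (y : Fin m → Bool) : ℝ :=
  (∏ i, coord p i (x i)) * ∏ j' ∈ Finset.univ.erase j, coord q j' (y j')

/-- The average payoff `û(p,q) = Σ_{x,y} P(x,y) u(x,y)` where
`P(x,y) = Π_i p_{i,x_i} Π_j q_{j,y_j}`. -/
def uhat {n m : ℕ} (u : (Fin n → Bool) → (Fin m → Bool) → ℝ)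
    (p : Fin n → ℝ) (q : Fin m → ℝ) : ℝ :=
  ∑ x : Fin n → Bool, ∑ y : Fin m → Bool,
    ((∏ i, coord p i (x i)) * ∏ j, coord q j (y j)) * u x y

/-- The average payoff conditioned on `xᵢ = b`:
`û_{i,b}(p,q) = Σ_{x : x_i = b} Σ_y K_{A,i}(x,y,p,q) u(x,y)`. -/
def uhatA {n m : ℕ} (u : (Fin n → Bool) → (Fin m → Bool) → ℝ)
    (p : Fin n → ℝ) (q : Fin m → ℝ) (i : Fin n) (b : Bool) : ℝ :=
  ∑ x : Fin n → Bool, ∑ y : Fin m → Bool,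
    if x i = b then KA p q i x y * u x y else 0

/-- The average payoff conditioned on `yⱼ = b`:
`û_{j,b}(p,q) = Σ_x Σ_{y : y_j = b} K_{B,j}(x,y,p,q) u(x,y)`. -/
def uhatB {n m : ℕ} (u : (Fin n → Bool) → (Fin m → Bool) → ℝ)
    (p : Fin n → ℝ) (q : Fin m → ℝ) (j : Fin m) (b : Bool) : ℝ :=
  ∑ x : Fin n → Bool, ∑ y : Fin m → Bool,
    if y j = b then KB p q j x y * u x y else 0

/-- `(p,q)` is a solution of the Red Queen dynamics
`ṗᵢ = pᵢ(û_{i,0}(p,q) − û(p,q))`, `q̇ⱼ = −qⱼ(û_{j,0}(p,q) − û(p,q))`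
for all times `t ≥ 0`. -/
def RQSolution {n m : ℕ} (u : (Fin n → Bool) → (Fin m → Bool) → ℝ)
    (p : ℝ → Fin n → ℝ) (q : ℝ → Fin m → ℝ) : Prop :=
  (∀ t, 0 ≤ t → ∀ i, HasDerivAt (fun s => p s i)
      (p t i * (uhatA u (p t) (q t) i false - uhat u (p t) (q t))) t) ∧
  (∀ t, 0 ≤ t → ∀ j, HasDerivAt (fun s => q s j)
      (-(q t j * (uhatB u (p t) (q t) j false - uhat u (p t) (q t)))) t)

/-- `(p,q)` takes values in the open cube `(0,1)^{n+m}` at all times `t ≥ 0`. -/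
def InteriorValues {n m : ℕ} (p : ℝ → Fin n → ℝ) (q : ℝ → Fin m → ℝ) : Prop :=
  ∀ t, 0 ≤ t → (∀ i, p t i ∈ Set.Ioo (0:ℝ) 1) ∧ (∀ j, q t j ∈ Set.Ioo (0:ℝ) 1)

/-- Binary Shannon entropy. -/
def binEnt (s : ℝ) : ℝ := -(s * Real.log s) - (1 - s) * Real.log (1 - s)

/-- The entropy `H(p) = Σᵢ h(pᵢ)` of a population. -/
def ent {n : ℕ} (p : Fin n → ℝ) : ℝ := ∑ i, binEnt (p i)

/-- The state `(p,q)` is `γ`-near the corner `(x,y)`: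
`p_{i,xᵢ} > 1 − γ` for all `i` and `q_{j,yⱼ} > 1 − γ` for all `j`. -/
def Near {n m : ℕ} (γ : ℝ) (x : Fin n → Bool) (y : Fin m → Bool)
    (p : Fin n → ℝ) (q : Fin m → ℝ) : Prop :=
  (∀ i, 1 - γ < coord p i (x i)) ∧ (∀ j, 1 - γ < coord q j (y j))

/-! ### Auxiliary lemmas -/

lemma coord_not' {n : ℕ} (p : Fin n → ℝ) (i : Fin n) (b : Bool) :
    coord p i (!b) = 1 - coord p i b := by cases b <;> simp [coord]

lemma coord_mem' {n : ℕ} {p : Fin n → ℝ} (h : ∀ i, p i ∈ Set.Icc (0:ℝ) 1) (i : Fin n) (b : Bool) :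
    coord p i b ∈ Set.Icc (0:ℝ) 1 := by
  rcases h i with ⟨h0, h1⟩
  cases b <;> simp [coord] <;> constructor <;> linarith

lemma sum_prod_coord' {n : ℕ} (p : Fin n → ℝ) :
    ∑ x : Fin n → Bool, ∏ i, coord p i (x i) = 1 := by
  rw [← Fintype.piFinset_univ, ← Finset.prod_univ_sum]
  simp [coord]

lemma abs_uhat_le' {n m : ℕ} {u : (Fin n → Bool) → (Fin m → Bool) → ℝ} {U : ℝ}
    (hUbd : ∀ x y, |u x y| ≤ U)
    {p : Fin n → ℝ} {q : Fin m → ℝ}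
    (hp : ∀ i, p i ∈ Set.Icc (0:ℝ) 1) (hq : ∀ j, q j ∈ Set.Icc (0:ℝ) 1) :
    |uhat u p q| ≤ U := by
  have hP : ∀ (x : Fin n → Bool), 0 ≤ ∏ i, coord p i (x i) := fun x =>
    Finset.prod_nonneg fun i _ => (coord_mem' hp i (x i)).1
  have hQ : ∀ (y : Fin m → Bool), 0 ≤ ∏ j, coord q j (y j) := fun y =>
    Finset.prod_nonneg fun j _ => (coord_mem' hq j (y j)).1
  calc |uhat u p q| ≤ ∑ x : Fin n → Bool, ∑ y : Fin m → Bool,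
        |((∏ i, coord p i (x i)) * ∏ j, coord q j (y j)) * u x y| := by
        refine (Finset.abs_sum_le_sum_abs _ _).trans ?_
        exact Finset.sum_le_sum fun x _ => Finset.abs_sum_le_sum_abs _ _
    _ ≤ ∑ x : Fin n → Bool, ∑ y : Fin m → Bool,
        ((∏ i, coord p i (x i)) * ∏ j, coord q j (y j)) * U := by
        refine Finset.sum_le_sum fun x _ => Finset.sum_le_sum fun y _ => ?_
        rw [abs_mul, abs_of_nonneg (mul_nonneg (hP x) (hQ y))]
        exact mul_le_mul_of_nonneg_left (hUbd x y) (mul_nonneg (hP x) (hQ y))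
    _ = U := by
        simp only [mul_assoc, ← Finset.mul_sum]
        rw [← Finset.sum_mul, sum_prod_coord', one_mul, ← Finset.sum_mul, sum_prod_coord',
          one_mul]

lemma prod_coord_split' {n : ℕ} (p : Fin n → ℝ) (x : Fin n → Bool) (i : Fin n) :
    ∏ i', coord p i' (x i') =
      coord p i (x i) * ∏ i' ∈ Finset.univ.erase i, coord p i' (x i') :=
  (Finset.mul_prod_erase Finset.univ _ (Finset.mem_univ i)).symm

lemma uhatA_eq' {n m : ℕ} (u : (Fin n → Bool) → (Fin m → Bool) → ℝ)
    (p : Fin n → ℝ) (q : Fin m → ℝ) (i : Fin n) (b : Bool) :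
    uhatA u p q i b = uhat u (Function.update p i (if b then 0 else 1)) q := by
  unfold uhatA uhat
  refine Finset.sum_congr rfl fun x _ => Finset.sum_congr rfl fun y _ => ?_
  rw [prod_coord_split' (Function.update p i (if b then 0 else 1)) x i]
  have h1 : ∏ i' ∈ Finset.univ.erase i,
      coord (Function.update p i (if b then 0 else 1)) i' (x i')
      = ∏ i' ∈ Finset.univ.erase i, coord p i' (x i') := by
    refine Finset.prod_congr rfl fun i' hi' => ?_
    have : i' ≠ i := (Finset.mem_erase.1 hi').1
    simp [coord, Function.update_of_ne this]
  have h2 : coord (Function.update p i (if b then 0 else 1)) i (x i)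
      = if x i = b then 1 else 0 := by
    cases b <;> cases hxi : x i <;> simp [coord, hxi]
  rw [h1, h2, KA]
  by_cases hxb : x i = b <;> simp [hxb]

lemma uhatB_eq' {n m : ℕ} (u : (Fin n → Bool) → (Fin m → Bool) → ℝ)
    (p : Fin n → ℝ) (q : Fin m → ℝ) (j : Fin m) (b : Bool) :
    uhatB u p q j b = uhat u p (Function.update q j (if b then 0 else 1)) := by
  unfold uhatB uhat
  refine Finset.sum_congr rfl fun x _ => Finset.sum_congr rfl fun y _ => ?_
  rw [show (∏ j', coord (Function.update q j (if b then 0 else 1)) j' (y j')) =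
      coord (Function.update q j (if b then 0 else 1)) j (y j) *
      ∏ j' ∈ Finset.univ.erase j, coord (Function.update q j (if b then 0 else 1)) j' (y j')
    from (Finset.mul_prod_erase Finset.univ _ (Finset.mem_univ j)).symm]
  have h1 : ∏ j' ∈ Finset.univ.erase j,
      coord (Function.update q j (if b then 0 else 1)) j' (y j')
      = ∏ j' ∈ Finset.univ.erase j, coord q j' (y j') := by
    refine Finset.prod_congr rfl fun j' hj' => ?_
    have : j' ≠ j := (Finset.mem_erase.1 hj').1
    simp [coord, Function.update_of_ne this]
  have h2 : coord (Function.update q j (if b then 0 else 1)) j (y j)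
      = if y j = b then 1 else 0 := by
    cases b <;> cases hyj : y j <;> simp [coord, hyj]
  rw [h1, h2, KB]
  by_cases hyb : y j = b <;> simp [hyb] <;> ring

lemma uhat_decompA' {n m : ℕ} (u : (Fin n → Bool) → (Fin m → Bool) → ℝ)
    (p : Fin n → ℝ) (q : Fin m → ℝ) (i : Fin n) :
    uhat u p q = p i * uhatA u p q i false + (1 - p i) * uhatA u p q i true := by
  unfold uhat uhatA
  rw [Finset.mul_sum, Finset.mul_sum, ← Finset.sum_add_distrib]
  refine Finset.sum_congr rfl fun x _ => ?_
  rw [Finset.mul_sum, Finset.mul_sum, ← Finset.sum_add_distrib]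
  refine Finset.sum_congr rfl fun y _ => ?_
  rw [prod_coord_split' p x i, KA]
  cases hxi : x i <;> simp [hxi, coord] <;> ring

lemma uhat_decompB' {n m : ℕ} (u : (Fin n → Bool) → (Fin m → Bool) → ℝ)
    (p : Fin n → ℝ) (q : Fin m → ℝ) (j : Fin m) :
    uhat u p q = q j * uhatB u p q j false + (1 - q j) * uhatB u p q j true := by
  unfold uhat uhatB
  rw [Finset.mul_sum, Finset.mul_sum, ← Finset.sum_add_distrib]
  refine Finset.sum_congr rfl fun x _ => ?_
  rw [Finset.mul_sum, Finset.mul_sum, ← Finset.sum_add_distrib]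
  refine Finset.sum_congr rfl fun y _ => ?_
  rw [show (∏ j', coord q j' (y j')) =
      coord q j (y j) * ∏ j' ∈ Finset.univ.erase j, coord q j' (y j')
    from (Finset.mul_prod_erase Finset.univ _ (Finset.mem_univ j)).symm, KB]
  cases hyj : y j <;> simp [hyj, coord] <;> ring

lemma update_mem_Icc {n : ℕ} {p : Fin n → ℝ} (hp : ∀ i, p i ∈ Set.Ioo (0:ℝ) 1)
    (i : Fin n) (b : Bool) (i' : Fin n) :
    Function.update p i (if b then 0 else 1) i' ∈ Set.Icc (0:ℝ) 1 := by
  rcases eq_or_ne i' i with rfl | h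
  · cases b <;> simp [Function.update_self]
  · rw [Function.update_of_ne h]
    exact ⟨(hp i').1.le, (hp i').2.le⟩

lemma abs_uhatA_le {n m : ℕ} {u : (Fin n → Bool) → (Fin m → Bool) → ℝ} {U : ℝ}
    (hUbd : ∀ x y, |u x y| ≤ U)
    {p : Fin n → ℝ} {q : Fin m → ℝ}
    (hp : ∀ i, p i ∈ Set.Ioo (0:ℝ) 1) (hq : ∀ j, q j ∈ Set.Ioo (0:ℝ) 1)
    (i : Fin n) (b : Bool) : |uhatA u p q i b| ≤ U := by
  rw [uhatA_eq']
  exact abs_uhat_le' hUbd (update_mem_Icc hp i b) (fun j => ⟨(hq j).1.le, (hq j).2.le⟩)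

lemma abs_uhatB_le {n m : ℕ} {u : (Fin n → Bool) → (Fin m → Bool) → ℝ} {U : ℝ}
    (hUbd : ∀ x y, |u x y| ≤ U)
    {p : Fin n → ℝ} {q : Fin m → ℝ}
    (hp : ∀ i, p i ∈ Set.Ioo (0:ℝ) 1) (hq : ∀ j, q j ∈ Set.Ioo (0:ℝ) 1)
    (j : Fin m) (b : Bool) : |uhatB u p q j b| ≤ U := by
  rw [uhatB_eq']
  exact abs_uhat_le' hUbd (fun i => ⟨(hp i).1.le, (hp i).2.le⟩) (update_mem_Icc hq j b)

lemma abs_driftA {n m : ℕ} {u : (Fin n → Bool) → (Fin m → Bool) → ℝ} {U : ℝ}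
    (hUbd : ∀ x y, |u x y| ≤ U)
    {p : Fin n → ℝ} {q : Fin m → ℝ}
    (hp : ∀ i, p i ∈ Set.Ioo (0:ℝ) 1) (hq : ∀ j, q j ∈ Set.Ioo (0:ℝ) 1)
    (i : Fin n) :
    |p i * (uhatA u p q i false - uhat u p q)| ≤ 2 * U * (p i * (1 - p i)) := by
  have h0 := (hp i).1
  have h1 := (hp i).2
  have key : p i * (uhatA u p q i false - uhat u p q)
      = p i * (1 - p i) * (uhatA u p q i false - uhatA u p q i true) := by
    rw [uhat_decompA' u p q i]; ring
  rw [key, abs_mul, abs_of_nonneg (by nlinarith : (0:ℝ) ≤ p i * (1 - p i))]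
  have hA : |uhatA u p q i false - uhatA u p q i true| ≤ 2 * U := by
    calc |uhatA u p q i false - uhatA u p q i true|
        ≤ |uhatA u p q i false| + |uhatA u p q i true| := abs_sub _ _
      _ ≤ 2 * U := by
        have := abs_uhatA_le hUbd hp hq i false
        have := abs_uhatA_le hUbd hp hq i true
        linarith
  calc p i * (1 - p i) * |uhatA u p q i false - uhatA u p q i true|
      ≤ p i * (1 - p i) * (2 * U) := by
        exact mul_le_mul_of_nonneg_left hA (by nlinarith)
    _ = 2 * U * (p i * (1 - p i)) := by ring

lemma abs_driftB {n m : ℕ} {u : (Fin n → Bool) → (Fin m → Bool) → ℝ} {U : ℝ}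
    (hUbd : ∀ x y, |u x y| ≤ U)
    {p : Fin n → ℝ} {q : Fin m → ℝ}
    (hp : ∀ i, p i ∈ Set.Ioo (0:ℝ) 1) (hq : ∀ j, q j ∈ Set.Ioo (0:ℝ) 1)
    (j : Fin m) :
    |q j * (uhatB u p q j false - uhat u p q)| ≤ 2 * U * (q j * (1 - q j)) := by
  have h0 := (hq j).1
  have h1 := (hq j).2
  have key : q j * (uhatB u p q j false - uhat u p q)
      = q j * (1 - q j) * (uhatB u p q j false - uhatB u p q j true) := by
    rw [uhat_decompB' u p q j]; ring
  rw [key, abs_mul, abs_of_nonneg (by nlinarith : (0:ℝ) ≤ q j * (1 - q j))]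
  have hA : |uhatB u p q j false - uhatB u p q j true| ≤ 2 * U := by
    calc |uhatB u p q j false - uhatB u p q j true|
        ≤ |uhatB u p q j false| + |uhatB u p q j true| := abs_sub _ _
      _ ≤ 2 * U := by
        have := abs_uhatB_le hUbd hp hq j false
        have := abs_uhatB_le hUbd hp hq j true
        linarith
  calc q j * (1 - q j) * |uhatB u p q j false - uhatB u p q j true|
      ≤ q j * (1 - q j) * (2 * U) := mul_le_mul_of_nonneg_left hA (by nlinarith)
    _ = 2 * U * (q j * (1 - q j)) := by ring

lemma gronwall_back {f f' : ℝ → ℝ} {a b K : ℝ} (hab : a ≤ b)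
    (hd : ∀ τ ∈ Set.Icc a b, HasDerivAt f (f' τ) τ)
    (hb : ∀ τ ∈ Set.Icc a b, |f' τ| ≤ K * |f τ|) :
    |f a| ≤ |f b| * Real.exp (K * (b - a)) := by
  set g : ℝ → ℝ := fun τ => f (a + b - τ) with hg
  have hmem : ∀ τ ∈ Set.Icc a b, a + b - τ ∈ Set.Icc a b := by
    intro τ hτ; constructor <;> [linarith [hτ.2]; linarith [hτ.1]]
  have hgd : ∀ τ ∈ Set.Icc a b, HasDerivAt g (-(f' (a + b - τ))) τ := by
    intro τ hτ
    have inner : HasDerivAt (fun x : ℝ => a + b - x) (-1) τ := by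
      simpa using (hasDerivAt_id τ).const_sub (a + b)
    have := (hd _ (hmem τ hτ)).comp τ inner
    have h' : HasDerivAt g (f' (a + b - τ) * -1) τ := this
    simpa [mul_comm] using h'
  have key := norm_le_gronwallBound_of_norm_deriv_right_le (f := g)
      (f' := fun τ => -(f' (a + b - τ))) (δ := |f b|) (K := K) (ε := 0) (a := a) (b := b)
      (fun τ hτ => (hgd τ hτ).continuousAt.continuousWithinAt)
      (fun τ hτ => ((hgd τ ⟨hτ.1, hτ.2.le⟩).hasDerivWithinAt))
      (by simp [hg])
      (fun τ hτ => by
        have := hb _ (hmem τ ⟨hτ.1, hτ.2.le⟩)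
        simpa [Real.norm_eq_abs, hg] using this)
      b ⟨hab, le_rfl⟩
  have : g b = f a := by simp [hg]
  rw [this, gronwallBound_ε0] at key
  simpa [Real.norm_eq_abs] using key
lemma coord_pos' {n : ℕ} {p : Fin n → ℝ} {i : Fin n} (h : p i ∈ Set.Ioo (0:ℝ) 1) (b : Bool) :
    0 < coord p i b := by
  obtain ⟨h0, h1⟩ := h; cases b <;> simp [coord] <;> linarith

lemma coord_ge' {n : ℕ} {p : Fin n → ℝ} {i : Fin n} (h : p i ∈ Set.Ioo (0:ℝ) 1) (b : Bool) :
    p i * (1 - p i) ≤ coord p i b := by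
  obtain ⟨h0, h1⟩ := h; cases b <;> simp [coord] <;> nlinarith

/-- (Lemma 4.2 of the paper.) Let `U = max_{x,y} |u(x,y)| > 0`
and `γ ∈ (0,1/2)`. If a Red Queen trajectory is `γ`-far from every corner at
time `t ≥ 0`, then it stays `(γ/2)`-far from every corner during the whole
interval `[t, t + 1/(4U)]`. -/
theorem stmt12 {n m : ℕ} (hn : 1 ≤ n) (hm : 1 ≤ m)
    (u : (Fin n → Bool) → (Fin m → Bool) → ℝ) (U : ℝ) (hU : 0 < U)
    (hUbd : ∀ (x : Fin n → Bool) (y : Fin m → Bool), |u x y| ≤ U)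
    (hUmax : ∃ (x : Fin n → Bool) (y : Fin m → Bool), |u x y| = U)
    (γ : ℝ) (hγ : γ ∈ Set.Ioo (0:ℝ) (1/2))
    (p : ℝ → Fin n → ℝ) (q : ℝ → Fin m → ℝ)
    (hsol : RQSolution u p q) (hint : InteriorValues p q)
    (t : ℝ) (ht : 0 ≤ t)
    (hfar : ∀ (x : Fin n → Bool) (y : Fin m → Bool), ¬ Near γ x y (p t) (q t)) :
    ∀ s, t ≤ s → s ≤ t + 1 / (4 * U) →
      ∀ (x : Fin n → Bool) (y : Fin m → Bool),
        ¬ Near (γ / 2) x y (p s) (q s) := by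
  intro s hs1 hs2 x y hnear
  apply hfar x y
  have hK : (0:ℝ) ≤ 2 * U := by linarith
  have hexp : Real.exp (2 * U * (s - t)) < 2 := by
    have h1 : 2 * U * (s - t) ≤ 1 / 2 := by
      have h2 : s - t ≤ 1 / (4 * U) := by linarith
      have := mul_le_mul_of_nonneg_left h2 hK
      calc 2 * U * (s - t) ≤ 2 * U * (1 / (4 * U)) := this
        _ = 1 / 2 := by field_simp; ring
    calc Real.exp (2 * U * (s - t)) ≤ Real.exp (1 / 2) := Real.exp_le_exp.2 h1
      _ < 2 := by
        have h3 : Real.exp (1/2) < Real.exp (Real.log 2) :=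
          Real.exp_lt_exp.2 (by linarith [Real.log_two_gt_d9])
        rwa [Real.exp_log two_pos] at h3
  have hexp0 : 0 < Real.exp (2 * U * (s - t)) := Real.exp_pos _
  obtain ⟨hγ0, hγ2⟩ := hγ
  constructor
  · -- the p-side
    intro i
    set D : ℝ → ℝ := fun τ => if x i then
        p τ i * (uhatA u (p τ) (q τ) i false - uhat u (p τ) (q τ))
      else -(p τ i * (uhatA u (p τ) (q τ) i false - uhat u (p τ) (q τ))) with hD
    have hd : ∀ τ ∈ Set.Icc t s, HasDerivAt (fun τ' => coord (p τ') i (!(x i))) (D τ) τ := by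
      intro τ hτ
      have hτ0 : 0 ≤ τ := ht.trans hτ.1
      have hder := hsol.1 τ hτ0 i
      cases hxi : x i
      · have : HasDerivAt (fun τ' => 1 - p τ' i)
            (-(p τ i * (uhatA u (p τ) (q τ) i false - uhat u (p τ) (q τ)))) τ :=
          hder.const_sub 1
        simpa [coord, hD, hxi] using this
      · simpa [coord, hD, hxi] using hder
    have hb : ∀ τ ∈ Set.Icc t s, |D τ| ≤ 2 * U * |coord (p τ) i (!(x i))| := by
      intro τ hτ
      have hτ0 : 0 ≤ τ := ht.trans hτ.1
      obtain ⟨hp, hq⟩ := hint τ hτ0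
      have h0 := (hp i).1
      have h1 := (hp i).2
      have hcoord : p τ i * (1 - p τ i) ≤ |coord (p τ) i (!(x i))| := by
        rw [abs_of_pos (coord_pos' (hp i) _)]; exact coord_ge' (hp i) _
      have hdrift := abs_driftA hUbd hp hq i
      have hDeq : |D τ| = |p τ i * (uhatA u (p τ) (q τ) i false - uhat u (p τ) (q τ))| := by
        cases hxi : x i <;> simp [hD, hxi, abs_neg]
      rw [hDeq]
      calc |p τ i * (uhatA u (p τ) (q τ) i false - uhat u (p τ) (q τ))|
          ≤ 2 * U * (p τ i * (1 - p τ i)) := hdrift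
        _ ≤ 2 * U * |coord (p τ) i (!(x i))| := mul_le_mul_of_nonneg_left hcoord hK
    have key := gronwall_back hs1 hd hb
    have hcs : coord (p s) i (!(x i)) < γ / 2 := by
      rw [coord_not']
      have := hnear.1 i
      linarith
    have hcs0 : 0 ≤ coord (p s) i (!(x i)) := by
      have hs0 : 0 ≤ s := ht.trans hs1
      obtain ⟨hp, _⟩ := hint s hs0
      exact (coord_mem' (fun i' => ⟨(hp i').1.le, (hp i').2.le⟩) i (!(x i))).1
    have hct0 : 0 ≤ coord (p t) i (!(x i)) := by
      obtain ⟨hp, _⟩ := hint t ht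
      exact (coord_mem' (fun i' => ⟨(hp i').1.le, (hp i').2.le⟩) i (!(x i))).1
    rw [abs_of_nonneg hct0, abs_of_nonneg hcs0] at key
    have : coord (p t) i (!(x i)) < γ := by nlinarith
    rw [coord_not'] at this
    linarith
  · -- the q-side
    intro j
    set D : ℝ → ℝ := fun τ => if y j then
        -(q τ j * (uhatB u (p τ) (q τ) j false - uhat u (p τ) (q τ)))
      else q τ j * (uhatB u (p τ) (q τ) j false - uhat u (p τ) (q τ)) with hD
    have hd : ∀ τ ∈ Set.Icc t s, HasDerivAt (fun τ' => coord (q τ') j (!(y j))) (D τ) τ := by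
      intro τ hτ
      have hτ0 : 0 ≤ τ := ht.trans hτ.1
      have hder := hsol.2 τ hτ0 j
      cases hyj : y j
      · have : HasDerivAt (fun τ' => 1 - q τ' j)
            (q τ j * (uhatB u (p τ) (q τ) j false - uhat u (p τ) (q τ))) τ := by
          simpa using hder.const_sub 1
        simpa [coord, hD, hyj] using this
      · simpa [coord, hD, hyj] using hder
    have hb : ∀ τ ∈ Set.Icc t s, |D τ| ≤ 2 * U * |coord (q τ) j (!(y j))| := by
      intro τ hτ
      have hτ0 : 0 ≤ τ := ht.trans hτ.1
      obtain ⟨hp, hq⟩ := hint τ hτ0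
      have h0 := (hq j).1
      have h1 := (hq j).2
      have hcoord : q τ j * (1 - q τ j) ≤ |coord (q τ) j (!(y j))| := by
        rw [abs_of_pos (coord_pos' (hq j) _)]; exact coord_ge' (hq j) _
      have hdrift := abs_driftB hUbd hp hq j
      have hDeq : |D τ| = |q τ j * (uhatB u (p τ) (q τ) j false - uhat u (p τ) (q τ))| := by
        cases hyj : y j <;> simp [hD, hyj, abs_neg]
      rw [hDeq]
      calc |q τ j * (uhatB u (p τ) (q τ) j false - uhat u (p τ) (q τ))|
          ≤ 2 * U * (q τ j * (1 - q τ j)) := hdrift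
        _ ≤ 2 * U * |coord (q τ) j (!(y j))| := mul_le_mul_of_nonneg_left hcoord hK
    have key := gronwall_back hs1 hd hb
    have hcs : coord (q s) j (!(y j)) < γ / 2 := by
      rw [coord_not']
      have := hnear.2 j
      linarith
    have hcs0 : 0 ≤ coord (q s) j (!(y j)) := by
      have hs0 : 0 ≤ s := ht.trans hs1
      obtain ⟨_, hq⟩ := hint s hs0
      exact (coord_mem' (fun j' => ⟨(hq j').1.le, (hq j').2.le⟩) j (!(y j))).1
    have hct0 : 0 ≤ coord (q t) j (!(y j)) := by
      obtain ⟨_, hq⟩ := hint t ht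
      exact (coord_mem' (fun j' => ⟨(hq j').1.le, (hq j').2.le⟩) j (!(y j))).1
    rw [abs_of_nonneg hct0, abs_of_nonneg hcs0] at key
    have : coord (q t) j (!(y j)) < γ := by nlinarith
    rw [coord_not'] at this
    linarith
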